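/- arXiv:2112.07405 — 2 statements merged into one kernel-verified Lean document; each statement's English description precedes it below -/
import Mathlib

section
/- Let c > 0 and D > 0, and let ν be a nonzero Borel measure on (0,∞) with m := ∫₀^∞ z ν(dz) < c (the net profit condition) and ∫₁^∞ e^{(c/D)z} ν(dz) < ∞. Define κ(r) = -c r + D r² + ∫₀^∞ (e^{r z} − 1) ν(dz). Then there exists r with 0 < r < c/D such that κ(r) = 0 (the adjustment coefficient). -/
open MeasureTheory Set Filter

private lemma exp_sub_one_le_mul {x : ℝ} (hx : 0 ≤ x) :
    Real.exp x - 1 ≤ x * Real.exp x := by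
  have h1 : 1 - x ≤ Real.exp (-x) := by linarith [Real.add_one_le_exp (-x)]
  have h2 : Real.exp x * Real.exp (-x) = 1 := by
    rw [← Real.exp_add]; simp
  nlinarith [Real.exp_pos x]

/-- Existence of the adjustment coefficient: under the net profit condition and an
exponential moment condition at rate `c / D`, the modified Lundberg equation
`κ(r) = -c r + D r² + ∫₀^∞ (e^{r z} − 1) ν(dz) = 0` has a root `r ∈ (0, c/D)`. -/
theorem adjustment_coefficient_exists
    (c D : ℝ) (hc : 0 < c) (hD : 0 < D)
    (ν : Measure ℝ) [SigmaFinite ν]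
    (hν : ν (Ioi (0 : ℝ)) ≠ 0)
    (hm_int : IntegrableOn (fun z => z) (Ioi (0 : ℝ)) ν)
    (hnpc : (∫ z in Ioi (0 : ℝ), z ∂ν) < c)
    (hexp : IntegrableOn (fun z => Real.exp ((c / D) * z)) (Ioi (1 : ℝ)) ν) :
    ∃ r : ℝ, 0 < r ∧ r < c / D ∧
      -c * r + D * r ^ 2 + (∫ z in Ioi (0 : ℝ), (Real.exp (r * z) - 1) ∂ν) = 0 := by
  set M : ℝ := c / D with hMdef
  have hM : 0 < M := div_pos hc hD
  -- integrability of the exponential indicator piece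
  have hexp_ind : Integrable ((Ioi (1:ℝ)).indicator (fun z => Real.exp (M * z)))
      (ν.restrict (Ioi (0:ℝ))) := by
    rw [integrable_indicator_iff measurableSet_Ioi, IntegrableOn,
      Measure.restrict_restrict measurableSet_Ioi, Ioi_inter_Ioi,
      max_eq_left (by norm_num : (0:ℝ) ≤ 1)]
    exact hexp
  -- dominant for (exp (r z) - 1), r ∈ [0, M]
  set g : ℝ → ℝ := fun z => (M * Real.exp M) * z +
      (Ioi (1:ℝ)).indicator (fun z => Real.exp (M * z)) z with hgdef
  have hg_int : Integrable g (ν.restrict (Ioi (0:ℝ))) :=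
    (hm_int.const_mul _).add hexp_ind
  have hg_bound : ∀ r : ℝ, r ∈ Icc 0 M → ∀ z ∈ Ioi (0:ℝ),
      ‖Real.exp (r * z) - 1‖ ≤ g z := by
    intro r hr z hz
    have hz0 : 0 < z := hz
    have hrz : 0 ≤ r * z := mul_nonneg hr.1 hz0.le
    rw [Real.norm_eq_abs, abs_of_nonneg (by linarith [Real.one_le_exp hrz])]
    rcases le_or_gt z 1 with h1 | h1
    · have hind : (0:ℝ) ≤ (Ioi (1:ℝ)).indicator (fun z => Real.exp (M * z)) z :=
        Set.indicator_nonneg (fun _ _ => (Real.exp_pos _).le) z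
      have key : Real.exp (r * z) - 1 ≤ (r * z) * Real.exp (r * z) :=
        exp_sub_one_le_mul hrz
      have h2 : r * z ≤ M := by nlinarith [hr.1, hr.2]
      have h3 : Real.exp (r * z) ≤ Real.exp M := Real.exp_le_exp.2 h2
      have h4 : (r * z) * Real.exp (r * z) ≤ (M * z) * Real.exp M := by
        apply mul_le_mul (by nlinarith [hr.2]) h3 (Real.exp_pos _).le
        positivity
      have h5 : (M * z) * Real.exp M = (M * Real.exp M) * z := by ring
      show Real.exp (r * z) - 1 ≤ (M * Real.exp M) * z +
        (Ioi (1:ℝ)).indicator (fun z => Real.exp (M * z)) z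
      nlinarith
    · have hind : (Ioi (1:ℝ)).indicator (fun z => Real.exp (M * z)) z
          = Real.exp (M * z) := Set.indicator_of_mem h1 _
      have h3 : Real.exp (r * z) ≤ Real.exp (M * z) :=
        Real.exp_le_exp.2 (by nlinarith [hr.2])
      have h5 : 0 ≤ (M * Real.exp M) * z := by positivity
      show Real.exp (r * z) - 1 ≤ (M * Real.exp M) * z +
        (Ioi (1:ℝ)).indicator (fun z => Real.exp (M * z)) z
      rw [hind]
      nlinarith
  -- integrability of (exp (r z) - 1) for r ∈ [0, M]
  have hF_int : ∀ r : ℝ, r ∈ Icc 0 M →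
      IntegrableOn (fun z => Real.exp (r * z) - 1) (Ioi (0:ℝ)) ν := by
    intro r hr
    apply Integrable.mono' hg_int
    · exact ((Real.continuous_exp.comp (continuous_const.mul continuous_id)).sub
        continuous_const).aestronglyMeasurable
    · rw [ae_restrict_iff' measurableSet_Ioi]
      exact Eventually.of_forall fun z hz => hg_bound r hr z hz
  -- dominant for z * exp (r z), r ∈ [0, M/2]
  set g₂ : ℝ → ℝ := fun z => Real.exp (M / 2) * z +
      (Ioi (1:ℝ)).indicator (fun z => (2 / M) * Real.exp (M * z)) z with hg2def
  have hg2_int : Integrable g₂ (ν.restrict (Ioi (0:ℝ))) := by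
    apply (hm_int.const_mul _).add
    rw [integrable_indicator_iff measurableSet_Ioi, IntegrableOn,
      Measure.restrict_restrict measurableSet_Ioi, Ioi_inter_Ioi,
      max_eq_left (by norm_num : (0:ℝ) ≤ 1)]
    exact hexp.const_mul _
  have hg2_bound : ∀ r : ℝ, r ∈ Icc 0 (M/2) → ∀ z ∈ Ioi (0:ℝ),
      ‖z * Real.exp (r * z)‖ ≤ g₂ z := by
    intro r hr z hz
    have hz0 : 0 < z := hz
    rw [Real.norm_eq_abs, abs_of_nonneg (by positivity)]
    rcases le_or_gt z 1 with h1 | h1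
    · have hind : (0:ℝ) ≤ (Ioi (1:ℝ)).indicator (fun z => (2/M) * Real.exp (M * z)) z :=
        Set.indicator_nonneg (fun _ _ => by positivity) z
      have h2 : r * z ≤ M / 2 := by nlinarith [hr.1, hr.2]
      have h3 : Real.exp (r * z) ≤ Real.exp (M/2) := Real.exp_le_exp.2 h2
      show z * Real.exp (r * z) ≤ Real.exp (M/2) * z +
        (Ioi (1:ℝ)).indicator (fun z => (2/M) * Real.exp (M * z)) z
      nlinarith
    · have hind : (Ioi (1:ℝ)).indicator (fun z => (2/M) * Real.exp (M * z)) z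
          = (2/M) * Real.exp (M * z) := Set.indicator_of_mem h1 _
      have hx : (M/2) * z ≤ Real.exp ((M/2) * z) := by
        linarith [Real.add_one_le_exp ((M/2)*z)]
      have hz2 : z ≤ (2/M) * Real.exp ((M/2) * z) := by
        have h6 := mul_le_mul_of_nonneg_left hx (by positivity : (0:ℝ) ≤ 2/M)
        have h7 : (2/M) * ((M/2) * z) = z := by field_simp
        linarith
      have h3 : Real.exp (r * z) ≤ Real.exp ((M/2) * z) :=
        Real.exp_le_exp.2 (by nlinarith [hr.2])
      have h8 : Real.exp ((M/2) * z) * Real.exp ((M/2) * z) = Real.exp (M * z) := by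
        rw [← Real.exp_add]; ring_nf
      have h9 : z * Real.exp (r * z) ≤ (2/M) * Real.exp (M * z) := by
        calc z * Real.exp (r * z) ≤ ((2/M) * Real.exp ((M/2)*z)) * Real.exp ((M/2)*z) := by
              apply mul_le_mul hz2 h3 (Real.exp_pos _).le (by positivity)
          _ = (2/M) * Real.exp (M * z) := by rw [mul_assoc, h8]
      show z * Real.exp (r * z) ≤ Real.exp (M/2) * z +
        (Ioi (1:ℝ)).indicator (fun z => (2/M) * Real.exp (M * z)) z
      rw [hind]
      nlinarith [mul_pos (Real.exp_pos (M/2)) hz0]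
  have hG_int : ∀ r : ℝ, r ∈ Icc 0 (M/2) →
      IntegrableOn (fun z => z * Real.exp (r * z)) (Ioi (0:ℝ)) ν := by
    intro r hr
    apply Integrable.mono' hg2_int
    · exact (continuous_id.mul (Real.continuous_exp.comp
        (continuous_const.mul continuous_id))).aestronglyMeasurable
    · rw [ae_restrict_iff' measurableSet_Ioi]
      exact Eventually.of_forall fun z hz => hg2_bound r hr z hz
  -- G(r) = ∫ z exp(r z) tends to m as r → 0⁺
  have hG_tendsto : Tendsto (fun r => ∫ z in Ioi (0:ℝ), z * Real.exp (r * z) ∂ν)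
      (nhdsWithin 0 (Ioi (0:ℝ))) (nhds (∫ z in Ioi (0:ℝ), z ∂ν)) := by
    have h := tendsto_integral_filter_of_dominated_convergence
      (F := fun r (z : ℝ) => z * Real.exp (r * z)) (f := fun z : ℝ => z)
      (μ := ν.restrict (Ioi (0:ℝ))) (l := nhdsWithin 0 (Ioi (0:ℝ))) g₂
      (Eventually.of_forall fun r =>
        (continuous_id.mul (Real.continuous_exp.comp
          (continuous_const.mul continuous_id))).aestronglyMeasurable)
      ?_ hg2_int ?_
    · exact h
    · filter_upwards [Ioo_mem_nhdsGT_of_mem (by constructor <;> [rfl; positivity] :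
        (0:ℝ) ∈ Ico 0 (M/2))] with r hr
      rw [ae_restrict_iff' measurableSet_Ioi]
      exact Eventually.of_forall fun z hz => hg2_bound r ⟨hr.1.le, hr.2.le⟩ z hz
    · apply Eventually.of_forall
      intro z
      have : Tendsto (fun r : ℝ => z * Real.exp (r * z)) (nhds 0) (nhds (z * Real.exp (0 * z))) :=
        (Continuous.tendsto (continuous_const.mul (Real.continuous_exp.comp
          (continuous_id.mul continuous_const))) 0)
      simpa using this.mono_left nhdsWithin_le_nhds
  -- pick r₀ > 0 small with D r₀ + G r₀ < c and r₀ < M/2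
  have hlt : ∀ᶠ r in nhdsWithin 0 (Ioi (0:ℝ)),
      D * r + (∫ z in Ioi (0:ℝ), z * Real.exp (r * z) ∂ν) < c := by
    have ht : Tendsto (fun r => D * r + ∫ z in Ioi (0:ℝ), z * Real.exp (r * z) ∂ν)
        (nhdsWithin 0 (Ioi (0:ℝ))) (nhds (D * 0 + ∫ z in Ioi (0:ℝ), z ∂ν)) :=
      Tendsto.add (((continuous_const.mul continuous_id).tendsto 0).mono_left
        nhdsWithin_le_nhds) hG_tendsto
    have : D * 0 + (∫ z in Ioi (0:ℝ), z ∂ν) < c := by simpa using hnpc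
    exact ht.eventually_lt tendsto_const_nhds this
  obtain ⟨r₀, hr₀mem, hr₀lt⟩ :=
    (hlt.and (Ioo_mem_nhdsGT_of_mem (⟨le_refl 0, by positivity⟩ :
      (0:ℝ) ∈ Ico 0 (M/2)))).exists
  obtain ⟨hr₀c, hr₀0, hr₀M2⟩ : (D * r₀ + (∫ z in Ioi (0:ℝ), z * Real.exp (r₀ * z) ∂ν) < c)
      ∧ 0 < r₀ ∧ r₀ < M/2 := ⟨hr₀mem, hr₀lt.1, hr₀lt.2⟩
  -- κ(r₀) < 0
  have hF_le : (∫ z in Ioi (0:ℝ), (Real.exp (r₀ * z) - 1) ∂ν)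
      ≤ r₀ * ∫ z in Ioi (0:ℝ), z * Real.exp (r₀ * z) ∂ν := by
    rw [← integral_const_mul]
    apply integral_mono_ae (hF_int r₀ ⟨hr₀0.le, by linarith⟩)
      ((hG_int r₀ ⟨hr₀0.le, hr₀M2.le⟩).const_mul r₀)
    rw [EventuallyLE, ae_restrict_iff' measurableSet_Ioi]
    apply Eventually.of_forall
    intro z hz
    have hz0 : 0 < z := hz
    have := exp_sub_one_le_mul (mul_nonneg hr₀0.le hz0.le)
    calc Real.exp (r₀ * z) - 1 ≤ (r₀ * z) * Real.exp (r₀ * z) := this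
      _ = r₀ * (z * Real.exp (r₀ * z)) := by ring
  have hκr₀ : -c * r₀ + D * r₀ ^ 2 + (∫ z in Ioi (0:ℝ), (Real.exp (r₀ * z) - 1) ∂ν) < 0 := by
    have : r₀ * (D * r₀ + (∫ z in Ioi (0:ℝ), z * Real.exp (r₀ * z) ∂ν)) < r₀ * c :=
      (mul_lt_mul_iff_right₀ hr₀0).2 hr₀c
    nlinarith
  -- κ(M) > 0
  have hFM_pos : 0 < ∫ z in Ioi (0:ℝ), (Real.exp (M * z) - 1) ∂ν := by
    rw [setIntegral_pos_iff_support_of_nonneg_ae]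
    · have hsub : Ioi (0:ℝ) ⊆ Function.support (fun z => Real.exp (M * z) - 1) := by
        intro z hz
        have hz0 : 0 < z := hz
        have h1e : 1 < Real.exp (M * z) := by
          rw [show (1:ℝ) = Real.exp 0 by simp]
          exact Real.exp_lt_exp.2 (by positivity)
        simp only [Function.mem_support]
        intro h
        linarith
      rw [Set.inter_eq_right.mpr hsub]
      exact pos_iff_ne_zero.mpr hν
    · rw [EventuallyLE, ae_restrict_iff' measurableSet_Ioi]
      apply Eventually.of_forall
      intro z hz
      have hz0 : 0 < z := hz
      simp only [Pi.zero_apply]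
      linarith [Real.one_le_exp (by positivity : (0:ℝ) ≤ M * z)]
    · exact hF_int M ⟨hM.le, le_refl M⟩
  have hκM : 0 < -c * M + D * M ^ 2 + (∫ z in Ioi (0:ℝ), (Real.exp (M * z) - 1) ∂ν) := by
    have : -c * M + D * M ^ 2 = 0 := by
      rw [hMdef]; field_simp; ring
    linarith
  -- continuity of κ on [r₀, M]
  have hκcont : ContinuousOn (fun r => -c * r + D * r ^ 2 +
      (∫ z in Ioi (0:ℝ), (Real.exp (r * z) - 1) ∂ν)) (Icc r₀ M) := by
    have hpoly : ContinuousOn (fun r : ℝ => -c * r + D * r ^ 2) (Icc r₀ M) := by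
      fun_prop
    apply hpoly.add
    intro r₁ hr₁
    have hr₁' : r₁ ∈ Icc 0 M := ⟨le_trans hr₀0.le hr₁.1, hr₁.2⟩
    have key : Tendsto (fun r => ∫ z in Ioi (0:ℝ), (Real.exp (r * z) - 1) ∂ν)
        (nhdsWithin r₁ (Icc 0 M))
        (nhds (∫ z in Ioi (0:ℝ), (Real.exp (r₁ * z) - 1) ∂ν)) := by
      apply tendsto_integral_filter_of_dominated_convergence g
        (Eventually.of_forall fun r =>
          ((Real.continuous_exp.comp (continuous_const.mul continuous_id)).sub
            continuous_const).aestronglyMeasurable)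
      · filter_upwards [self_mem_nhdsWithin] with r hr
        rw [ae_restrict_iff' measurableSet_Ioi]
        exact Eventually.of_forall fun z hz => hg_bound r hr z hz
      · exact hg_int
      · apply Eventually.of_forall
        intro z
        exact ((Continuous.tendsto ((Real.continuous_exp.comp
          (continuous_id.mul continuous_const)).sub continuous_const) r₁).mono_left
          nhdsWithin_le_nhds)
    exact key.mono_left (nhdsWithin_mono r₁ (Icc_subset_Icc hr₀0.le le_rfl))
  -- intermediate value theorem
  have hr₀M : r₀ ≤ M := by linarith
  have := intermediate_value_Ioo hr₀M hκcont
  have h0mem : (0:ℝ) ∈ Ioo (-c * r₀ + D * r₀ ^ 2 + (∫ z in Ioi (0:ℝ), (Real.exp (r₀ * z) - 1) ∂ν))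
      (-c * M + D * M ^ 2 + (∫ z in Ioi (0:ℝ), (Real.exp (M * z) - 1) ∂ν)) := ⟨hκr₀, hκM⟩
  obtain ⟨r, hrmem, hr⟩ := this h0mem
  exact ⟨r, lt_trans hr₀0 hrmem.1, hrmem.2, hr⟩
end

section
/- Let c > 0, D > 0, and let ν be a Borel measure on (0,∞) with Π(x) := ν((x,∞)). Suppose γ satisfies 0 < γ < c/D, ∫₀^∞ (e^{γ z} − 1) ν(dz) < ∞, and the Lundberg identity c γ − D γ² = ∫₀^∞ (e^{γ z} − 1) ν(dz). Define k_D(x) = (c/D) e^{−(c/D) x} and g(u) = (1/c) ∫₀^u k_D(u − x) Π(x) dx. Then ∫₀^∞ e^{γ z} g(z) dz = 1; that is, the exponentially tilted function e^{γ z} g(z) is a probability density on (0,∞). -/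
open MeasureTheory Set

/-- The tail of the Lévy measure `ν`: `Π(x) = ν((x,∞))`. -/
noncomputable def nuTail (ν : Measure ℝ) (x : ℝ) : ℝ := (ν (Ioi x)).toReal

/-- The exponential density `k_D(x) = (c/D) e^{−(c/D)x}`. -/
noncomputable def kDens (c D x : ℝ) : ℝ := (c / D) * Real.exp (-(c / D) * x)

/-- The renewal kernel `g(u) = (1/c) ∫₀^u k_D(u−x) Π(x) dx`. -/
noncomputable def renKer (c D : ℝ) (ν : Measure ℝ) (u : ℝ) : ℝ :=
  (1 / c) * ∫ x in (0 : ℝ)..u, kDens c D (u - x) * nuTail ν x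


/-!
Writing `K(t) = e^{γt} k_D(t)` and `T(x) = e^{γx} Π(x)`, the tilted kernel `e^{γz} g(z)` is
`(1/c) (K ⋆ T)(z)`, so by Tonelli its integral over `(0,∞)` is `(1/c) (∫ K) (∫ T)`.
Here `∫ K = c / (c - Dγ)` is an exponential integral, and the layer-cake formula gives
`∫ T = ∫ (e^{γz} - 1)/γ ν(dz) = c - Dγ` by the Lundberg identity.
Everything is computed in `ℝ≥0∞`, which needs no integrability of the tail near `0`.
-/

open scoped ENNReal

theorem lintegral_lintegral_sub_mul {G : Type*} [AddGroup G] [MeasurableSpace G]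
    [MeasurableAdd₂ G] [MeasurableNeg G] (μ : Measure G) [SFinite μ] [μ.IsAddRightInvariant]
    {f g : G → ℝ≥0∞} (hf : Measurable f) (hg : Measurable g) :
    ∫⁻ z, ∫⁻ x, f (z - x) * g x ∂μ ∂μ = (∫⁻ t, f t ∂μ) * ∫⁻ x, g x ∂μ := by
  rw [lintegral_lintegral_swap
    ((hf.comp measurable_sub).mul (hg.comp measurable_snd)).aemeasurable]
  calc ∫⁻ x, ∫⁻ z, f (z - x) * g x ∂μ ∂μ = ∫⁻ x, (∫⁻ z, f (z - x) ∂μ) * g x ∂μ :=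
        lintegral_congr fun x => lintegral_mul_const _ (hf.comp (measurable_sub_const x))
    _ = (∫⁻ t, f t ∂μ) * ∫⁻ x, g x ∂μ := by
        simp_rw [lintegral_sub_right_eq_self, lintegral_const_mul _ hg]

noncomputable def halfLineConv (f g : ℝ → ℝ≥0∞) (z : ℝ) : ℝ≥0∞ :=
  ∫⁻ x in Ioo 0 z, f (z - x) * g x

theorem halfLineConv_eq_lintegral_indicator (f g : ℝ → ℝ≥0∞) (z : ℝ) :
    halfLineConv f g z = ∫⁻ x, (Ioi 0).indicator f (z - x) * (Ioi 0).indicator g x := by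
  rw [halfLineConv, ← lintegral_indicator measurableSet_Ioo]
  congr 1 with x
  simp only [indicator_apply, mem_Ioo, mem_Ioi, sub_pos]
  split_ifs <;> simp_all

theorem measurable_halfLineConv {f g : ℝ → ℝ≥0∞} (hf : Measurable f) (hg : Measurable g) :
    Measurable (halfLineConv f g) := by
  simp_rw [funext (halfLineConv_eq_lintegral_indicator f g)]
  exact Measurable.lintegral_prod_right'
    (((hf.indicator measurableSet_Ioi).comp measurable_sub).mul
      ((hg.indicator measurableSet_Ioi).comp measurable_snd))

theorem lintegral_halfLineConv {f g : ℝ → ℝ≥0∞} (hf : Measurable f) (hg : Measurable g) :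
    ∫⁻ z in Ioi 0, halfLineConv f g z = (∫⁻ t in Ioi 0, f t) * ∫⁻ x in Ioi 0, g x := by
  have hvanish : ∀ z ∉ Ioi (0 : ℝ), halfLineConv f g z = 0 := fun z hz => by
    rw [halfLineConv, Ioo_eq_empty (by simpa using hz), Measure.restrict_empty,
      lintegral_zero_measure]
  rw [setLIntegral_eq_of_support_subset (fun z hz => by_contra fun h => hz (hvanish z h)),
    ← lintegral_indicator measurableSet_Ioi, ← lintegral_indicator measurableSet_Ioi]
  simp_rw [halfLineConv_eq_lintegral_indicator]
  exact lintegral_lintegral_sub_mul volume (hf.indicator measurableSet_Ioi)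
    (hg.indicator measurableSet_Ioi)

theorem lintegral_measure_Ioi_mul_exp (ν : Measure ℝ) {γ : ℝ} (hγ : γ ≠ 0) :
    ∫⁻ x in Ioi 0, ν (Ioi x) * ENNReal.ofReal (Real.exp (γ * x)) =
      ∫⁻ z in Ioi 0, ENNReal.ofReal ((Real.exp (γ * z) - 1) / γ) ∂ν := by
  have hcake := lintegral_comp_eq_lintegral_meas_lt_mul (ν.restrict (Ioi 0)) (f := id)
    (ae_restrict_of_forall_mem measurableSet_Ioi fun z hz => le_of_lt hz) aemeasurable_id
    (fun t _ => (by fun_prop : Continuous fun x => Real.exp (γ * x)).intervalIntegrable 0 t)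
    (ae_of_all _ fun t => (Real.exp_pos _).le)
  have hprimitive (z : ℝ) :
      ∫ t in (0 : ℝ)..z, Real.exp (γ * t) = (Real.exp (γ * z) - 1) / γ := by
    rw [intervalIntegral.integral_comp_mul_left Real.exp hγ, integral_exp]
    simp [div_eq_inv_mul]
  simp only [id, hprimitive] at hcake
  rw [hcake]
  refine setLIntegral_congr_fun measurableSet_Ioi fun x hx => ?_
  rw [Measure.restrict_apply' measurableSet_Ioi]
  congr 2
  ext z
  simpa using fun (hxz : x < z) => hx.trans hxz

theorem measurable_measure_Ioi (ν : Measure ℝ) : Measurable fun x => ν (Ioi x) :=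
  Antitone.measurable fun _ _ hxy => measure_mono (Ioi_subset_Ioi hxy)

@[fun_prop]
theorem measurable_nuTail (ν : Measure ℝ) : Measurable (nuTail ν) :=
  (measurable_measure_Ioi ν).ennreal_toReal

theorem nuTail_nonneg (ν : Measure ℝ) (x : ℝ) : 0 ≤ nuTail ν x :=
  ENNReal.toReal_nonneg

@[fun_prop]
theorem measurable_kDens (c D : ℝ) : Measurable (kDens c D) := by
  unfold kDens
  fun_prop

theorem kDens_nonneg {c D : ℝ} (hcD : 0 ≤ c / D) (t : ℝ) : 0 ≤ kDens c D t := by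
  unfold kDens
  positivity

theorem lintegral_exp_mul_nuTail (ν : Measure ℝ) {γ : ℝ} (hγ : 0 < γ)
    (hint : IntegrableOn (fun z => Real.exp (γ * z) - 1) (Ioi 0) ν) :
    ∫⁻ x in Ioi 0, ENNReal.ofReal (Real.exp (γ * x) * nuTail ν x) =
      ENNReal.ofReal ((∫ z in Ioi 0, (Real.exp (γ * z) - 1) ∂ν) / γ) := by
  have hpos : ∀ᵐ z ∂ν.restrict (Ioi 0), 0 ≤ (Real.exp (γ * z) - 1) / γ :=
    ae_restrict_of_forall_mem measurableSet_Ioi fun z hz =>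
      div_nonneg (sub_nonneg.2 (Real.one_le_exp (mul_pos hγ hz).le)) hγ.le
  have hcake := lintegral_measure_Ioi_mul_exp ν hγ.ne'
  rw [← ofReal_integral_eq_lintegral_ofReal (hint.div_const γ) hpos, integral_div] at hcake
  have hfin :
      ∀ᵐ x ∂volume.restrict (Ioi 0), ν (Ioi x) * ENNReal.ofReal (Real.exp (γ * x)) < ∞ :=
    ae_lt_top ((measurable_measure_Ioi ν).mul (by fun_prop)) (hcake ▸ ENNReal.ofReal_ne_top)
  rw [← hcake]
  refine lintegral_congr_ae (hfin.mono fun x hx => ?_)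
  have htail : ν (Ioi x) ≠ ∞ := by
    refine fun h => hx.ne ?_
    rw [h, ENNReal.top_mul (ENNReal.ofReal_pos.2 (Real.exp_pos _)).ne']
  dsimp only
  rw [mul_comm, nuTail, ENNReal.ofReal_mul ENNReal.toReal_nonneg, ENNReal.ofReal_toReal htail]

theorem lintegral_exp_mul_kDens {c D γ : ℝ} (hcD : 0 ≤ c / D) (hγ : γ < c / D) :
    ∫⁻ t in Ioi 0, ENNReal.ofReal (Real.exp (γ * t) * kDens c D t) =
      ENNReal.ofReal (c / D / (c / D - γ)) := by
  have hrate : 0 < c / D - γ := sub_pos.2 hγ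
  have htilt (t : ℝ) :
      Real.exp (γ * t) * kDens c D t = c / D * Real.exp (-(c / D - γ) * t) := by
    rw [kDens, mul_left_comm, ← Real.exp_add]
    ring_nf
  simp_rw [htilt]
  rw [← ofReal_integral_eq_lintegral_ofReal ((exp_neg_integrableOn_Ioi 0 hrate).const_mul _)
    (ae_of_all _ fun t => by positivity), integral_const_mul,
    integral_exp_mul_Ioi (neg_lt_zero.2 hrate)]
  congr 1
  field_simp
  simp

/-- This also holds when the convolution is infinite: then the Bochner integral in `renKer` and
`toReal ⊤` both take the junk value `0`. -/
theorem exp_mul_renKer_eq_toReal {c D : ℝ} (hc : 0 ≤ c) (hcD : 0 ≤ c / D) (γ : ℝ)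
    (ν : Measure ℝ) {z : ℝ} (hz : 0 ≤ z) :
    Real.exp (γ * z) * renKer c D ν z =
      (ENNReal.ofReal (1 / c) *
        halfLineConv (fun t => ENNReal.ofReal (Real.exp (γ * t) * kDens c D t))
          (fun x => ENNReal.ofReal (Real.exp (γ * x) * nuTail ν x)) z).toReal := by
  have htilt (x : ℝ) : Real.exp (γ * z) * (kDens c D (z - x) * nuTail ν x) =
      Real.exp (γ * (z - x)) * kDens c D (z - x) * (Real.exp (γ * x) * nuTail ν x) := by
    rw [show γ * z = γ * (z - x) + γ * x by ring, Real.exp_add]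
    ring
  have hnonneg (x : ℝ) : 0 ≤ Real.exp (γ * (z - x)) * kDens c D (z - x) :=
    mul_nonneg (Real.exp_pos _).le (kDens_nonneg hcD _)
  rw [renKer, intervalIntegral.integral_of_le hz, integral_Ioc_eq_integral_Ioo, mul_left_comm,
    ← integral_const_mul]
  simp_rw [htilt]
  rw [integral_eq_lintegral_of_nonneg_ae
      (ae_of_all _ fun x => mul_nonneg (hnonneg x) (mul_nonneg (Real.exp_pos _).le
        (nuTail_nonneg ν x))) (by fun_prop : Measurable _).aestronglyMeasurable,
    ENNReal.toReal_mul, ENNReal.toReal_ofReal (by positivity), halfLineConv]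
  simp_rw [ENNReal.ofReal_mul (hnonneg _)]

theorem tilted_kernel_is_density_general
    (c D γ : ℝ) (hc : 0 < c) (hD : 0 < D)
    (ν : Measure ℝ)
    (hγ0 : 0 < γ) (hγ : γ < c / D)
    (hint : IntegrableOn (fun z => Real.exp (γ * z) - 1) (Ioi (0 : ℝ)) ν)
    (hlund : c * γ - D * γ ^ 2 = ∫ z in Ioi (0 : ℝ), (Real.exp (γ * z) - 1) ∂ν) :
    (∫ z in Ioi (0 : ℝ), Real.exp (γ * z) * renKer c D ν z) = 1 := by
  have hcD : 0 < c / D := div_pos hc hD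
  have hDγ : 0 < c - D * γ := by rw [lt_div_iff₀ hD] at hγ; linarith
  set K := fun t => ENNReal.ofReal (Real.exp (γ * t) * kDens c D t)
  set T := fun x => ENNReal.ofReal (Real.exp (γ * x) * nuTail ν x)
  have hKm : Measurable K := by fun_prop
  have hTm : Measurable T := by fun_prop
  have hKT : ∫⁻ z in Ioi 0, halfLineConv K T z =
      ENNReal.ofReal (c / D / (c / D - γ)) * ENNReal.ofReal (c - D * γ) := by
    rw [lintegral_halfLineConv hKm hTm, lintegral_exp_mul_kDens hcD.le hγ,
      lintegral_exp_mul_nuTail ν hγ0 hint, ← hlund]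
    congr 2
    field_simp
  have hfin : ∀ᵐ z ∂volume.restrict (Ioi 0), halfLineConv K T z < ∞ :=
    ae_lt_top (measurable_halfLineConv hKm hTm) (by rw [hKT]; finiteness)
  calc ∫ z in Ioi 0, Real.exp (γ * z) * renKer c D ν z
      = ∫ z in Ioi 0, (ENNReal.ofReal (1 / c) * halfLineConv K T z).toReal :=
        setIntegral_congr_fun measurableSet_Ioi fun z hz =>
          exp_mul_renKer_eq_toReal hc.le hcD.le γ ν hz.le
    _ = (ENNReal.ofReal (1 / c) * ∫⁻ z in Ioi 0, halfLineConv K T z).toReal := by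
        simp_rw [ENNReal.toReal_mul]
        rw [integral_const_mul,
          integral_toReal (measurable_halfLineConv hKm hTm).aemeasurable hfin]
    _ = 1 := by
        rw [hKT, ENNReal.toReal_mul, ENNReal.toReal_mul, ENNReal.toReal_ofReal (by positivity),
          ENNReal.toReal_ofReal (div_nonneg hcD.le (sub_pos.2 hγ).le),
          ENNReal.toReal_ofReal hDγ.le]
        field_simp [hDγ.ne']

/-- The exponentially tilted renewal kernel `e^{γz} g(z)` integrates to `1` when `γ`
is the adjustment coefficient, i.e. when the Lundberg identity holds. -/
theorem tilted_kernel_is_density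
    (c D γ : ℝ) (hc : 0 < c) (hD : 0 < D)
    (ν : Measure ℝ) [SigmaFinite ν]
    (hγ0 : 0 < γ) (hγ : γ < c / D)
    (hint : IntegrableOn (fun z => Real.exp (γ * z) - 1) (Ioi (0 : ℝ)) ν)
    (hlund : c * γ - D * γ ^ 2 = ∫ z in Ioi (0 : ℝ), (Real.exp (γ * z) - 1) ∂ν) :
    (∫ z in Ioi (0 : ℝ), Real.exp (γ * z) * renKer c D ν z) = 1 :=
  tilted_kernel_is_density_general c D γ hc hD ν hγ0 hγ hint hlund
end
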